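/- Assume the Mecke identity with Papangelou intensity r, condition (K0): c(x,y,γ) = 0 whenever r(x,γ) = 0 or r(y,γ) = 0, and condition (K1): for every Λ ∈ B₀(X), ∫_Γ ∑_{x∈γ} ∫_X c(x,y,γ\{x})(χ_Λ(x)+χ_Λ(y)) ν(dy) μ(dγ) < ∞. If F, G ∈ FC_b and F = 0 μ-almost everywhere, then ℰ_K(F,G) = 0, where ℰ_K(F,G) := ∫_Γ ∑_{x∈γ} ∫_X c(x,y,γ\{x}) (D_{xy}^{-+}F)(γ)(D_{xy}^{-+}G)(γ) ν(dy) μ(dγ). -/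

import Mathlib

open MeasureTheory Set ENNReal Filter Topology

noncomputable section

/-- The configuration space over `X`: the set of all locally finite subsets of `X`. -/
def Config (X : Type*) [TopologicalSpace X] : Type _ :=
  {γ : Set X // ∀ K : Set X, IsCompact K → (γ ∩ K).Finite}

namespace Config

variable {X : Type*} [TopologicalSpace X]

/-- Removal of a point from a configuration, `γ \ {x}`. -/
def erase (γ : Config X) (x : X) : Config X :=
  ⟨γ.1 \ {x}, fun K hK => (γ.2 K hK).subset fun _ hz => ⟨hz.1.1, hz.2⟩⟩

/-- Insertion of a point into a configuration, `γ ∪ {x}`. -/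
def ins (γ : Config X) (x : X) : Config X :=
  ⟨insert x γ.1, fun K hK => ((γ.2 K hK).insert x).subset (by
    rintro z ⟨hz1, hz2⟩
    rcases Set.mem_insert_iff.mp hz1 with rfl | h
    · exact Set.mem_insert _ _
    · exact Set.mem_insert_of_mem _ ⟨h, hz2⟩)⟩

end Config

variable {X : Type*} [TopologicalSpace X]

/-- Cylinder functions `FC_b`: `F(γ) = g(⟨φ₁,γ⟩, …, ⟨φ_N,γ⟩)` with the `φᵢ` continuous
with compact support and `g` bounded continuous; here `⟨φ,γ⟩ = ∑_{x∈γ} φ(x)`. -/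
def IsCylinder (F : Config X → ℝ) : Prop :=
  ∃ (N : ℕ) (φ : Fin N → X → ℝ) (g : (Fin N → ℝ) → ℝ),
    (∀ i, Continuous (φ i)) ∧ (∀ i, HasCompactSupport (φ i)) ∧
      Continuous g ∧ (∃ C : ℝ, ∀ v, |g v| ≤ C) ∧
      ∀ γ : Config X, F γ = g fun i => ∑' x : γ.1, φ i x

/-- `(D_x^- F)(γ) = F(γ \ {x}) - F(γ)`. -/
def Dm (F : Config X → ℝ) (x : X) (γ : Config X) : ℝ := F (γ.erase x) - F γ

/-- `(D_x^+ F)(γ) = F(γ ∪ {x}) - F(γ)`. -/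
def Dp (F : Config X → ℝ) (x : X) (γ : Config X) : ℝ := F (γ.ins x) - F γ

/-- `(D_{xy}^{-+} F)(γ) = F((γ \ {x}) ∪ {y}) - F(γ)`. -/
def Dpm (F : Config X → ℝ) (x y : X) (γ : Config X) : ℝ := F ((γ.erase x).ins y) - F γ

variable [MeasurableSpace X]

/-- `Λ ∈ B₀(X)`: a relatively compact Borel set. -/
def IsB0 (Λ : Set X) : Prop := MeasurableSet Λ ∧ IsCompact (closure Λ)

/-- The σ-algebra on `Config X` generated by the counting maps `γ ↦ |γ ∩ Λ|`, `Λ ∈ B₀(X)`. -/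
instance : MeasurableSpace (Config X) :=
  ⨆ (Λ : Set X) (_ : IsB0 Λ),
    MeasurableSpace.comap (fun γ : Config X => (γ.1 ∩ Λ).ncard) ⊤

/-- The Mecke identity: `r` is a Papangelou intensity for `μ`, i.e.
`∫ ∑_{x∈γ} H(x,γ) μ(dγ) = ∫ ∫ r(x,γ) H(x,γ∪{x}) ν(dx) μ(dγ)` for measurable `H ≥ 0`. -/
def MeckeIdentity (ν : Measure X) (μ : Measure (Config X)) (r : X → Config X → ℝ) : Prop :=
  ∀ H : X → Config X → ℝ≥0∞, Measurable (fun p : X × Config X => H p.1 p.2) →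
    ∫⁻ γ, ∑' x : γ.1, H (x : X) γ ∂μ =
      ∫⁻ γ, ∫⁻ x, ENNReal.ofReal (r x γ) * H x (γ.ins x) ∂ν ∂μ

/-- Condition (G1): `∫ ∑_{x∈γ∩Λ} d(x,γ\{x}) μ(dγ) < ∞` for every `Λ ∈ B₀(X)`. -/
def CondG1 (μ : Measure (Config X)) (d : X → Config X → ℝ) : Prop :=
  ∀ Λ : Set X, IsB0 Λ →
    ∫⁻ γ, ∑' x : ↥(γ.1 ∩ Λ), ENNReal.ofReal (d (x : X) (γ.erase (x : X))) ∂μ < ⊤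

/-- Condition (K1): `∫ ∑_{x∈γ} ∫ c(x,y,γ\{x})(χ_Λ(x)+χ_Λ(y)) ν(dy) μ(dγ) < ∞`
for every `Λ ∈ B₀(X)`. -/
def CondK1 (ν : Measure X) (μ : Measure (Config X)) (c : X → X → Config X → ℝ) : Prop :=
  ∀ Λ : Set X, IsB0 Λ →
    ∫⁻ γ, ∑' x : γ.1, ∫⁻ y,
        ENNReal.ofReal (c (x : X) y (γ.erase (x : X))) *
          (Λ.indicator (1 : X → ℝ≥0∞) (x : X) + Λ.indicator (1 : X → ℝ≥0∞) y) ∂ν ∂μ < ⊤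

/-- The Glauber Dirichlet form `ℰ_G(F,G)`. -/
def glauberE (μ : Measure (Config X)) (d : X → Config X → ℝ) (F G : Config X → ℝ) : ℝ :=
  ∫ γ, (∑' x : γ.1, d (x : X) (γ.erase (x : X)) * Dm F (x : X) γ * Dm G (x : X) γ) ∂μ

/-- The Kawasaki Dirichlet form `ℰ_K(F,G)`. -/
def kawasakiE (ν : Measure X) (μ : Measure (Config X)) (c : X → X → Config X → ℝ)
    (F G : Config X → ℝ) : ℝ :=
  ∫ γ, (∑' x : γ.1, ∫ y, c (x : X) y (γ.erase (x : X)) * Dpm F (x : X) y γ *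
    Dpm G (x : X) y γ ∂ν) ∂μ

/-!
Apply the Mecke identity twice. With `H(x,γ) = 1{F(γ) ≠ 0}` its left side vanishes, because
`F = 0` μ-a.e.; hence for μ-a.e. `γ` and ν-a.e. `y` with `r(y,γ) > 0` we get `F(γ ∪ {y}) = 0`,
and by (K0) the same holds for ν-a.e. `y` with `c(x,y,γ) ≠ 0`, whatever `x`. Used in the other
direction, the identity carries this property of `(x,γ)` for ν-a.e. `x` over to the pairs
`(x, γ \ {x})` with `x ∈ γ`: for ν-a.e. `x` we have `x ∉ γ`, so `(γ ∪ {x}) \ {x} = γ`. Thus for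
μ-a.e. `γ`, all `x ∈ γ` and ν-a.e. `y`, either `c(x,y,γ\{x}) = 0` or both `F(γ) = 0` and
`F((γ\{x}) ∪ {y}) = 0`, and the integrand of `ℰ_K(F,G)` vanishes μ-a.e.

The measurability behind both applications comes from the measure-valued map
`γ ↦ ∑_{x∈γ} δ_{(x,γ)}`, which is measurable by a Dynkin argument on compact pieces of `X`.
-/

lemma MeasureTheory.Measure.sum_dirac_apply {α : Type*} [MeasurableSpace α] (s : Set α)
    {A : Set α} (hA : MeasurableSet A) :
    (Measure.sum fun x : s => Measure.dirac (x : α)) A = (s ∩ A).encard := by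
  simp_rw [Measure.sum_apply _ hA, Measure.dirac_apply' _ hA, ← tsum_set_one]
  rw [tsum_subtype s (A.indicator 1), tsum_subtype (s ∩ A) (fun _ => 1), indicator_indicator]
  rfl

lemma tsum_eq_toReal_sub_toReal {ι : Type*} {f : ι → ℝ} (hf : (Function.support f).Finite) :
    ∑' i, f i = (∑' i, ENNReal.ofReal (f i)).toReal - (∑' i, ENNReal.ofReal (-f i)).toReal := by
  have hs : ∀ g : ι → ℝ, Function.support g ⊆ Function.support f → Summable g :=
    fun g hg => summable_of_hasFiniteSupport (hf.subset hg)
  rw [ENNReal.tsum_toReal_eq fun _ => ofReal_ne_top, ENNReal.tsum_toReal_eq fun _ => ofReal_ne_top,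
    ← (hs _ _).tsum_sub (hs _ _)]
  · simp_rw [ENNReal.toReal_ofReal', max_zero_sub_max_neg_zero_eq_self]
  all_goals intro i hi h0; simp [h0] at hi

lemma measurableSet_setOf_ae {α β : Type*} [MeasurableSpace α] [MeasurableSpace β]
    {ν : Measure β} [SFinite ν] {p : α → β → Prop}
    (hp : MeasurableSet {q : α × β | p q.1 q.2}) : MeasurableSet {a | ∀ᵐ b ∂ν, p a b} := by
  simp_rw [ae_iff]
  exact measurable_measure_prodMk_left hp.compl (measurableSet_singleton 0)

namespace Config

section

variable {X : Type*} [TopologicalSpace X]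

lemma isClosed [T2Space X] [LocallyCompactSpace X] (γ : Config X) : IsClosed γ.1 := by
  refine isOpen_compl_iff.1 (isOpen_iff_mem_nhds.2 fun x hx => ?_)
  obtain ⟨K, hK, hKx⟩ := exists_compact_mem_nhds x
  have hxK : x ∈ (γ.1 ∩ K)ᶜ := fun h => hx h.1
  filter_upwards [(γ.2 K hK).isClosed.isOpen_compl.mem_nhds hxK, hKx] with z hz hzK hzγ
  exact hz ⟨hzγ, hzK⟩

lemma countable [SigmaCompactSpace X] (γ : Config X) : γ.1.Countable := by
  rw [← inter_univ γ.1, ← iUnion_compactCovering, inter_iUnion]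
  exact countable_iUnion fun n => (γ.2 _ (isCompact_compactCovering X n)).countable

lemma erase_ins_of_notMem {γ : Config X} {x : X} (hx : x ∉ γ.1) : (γ.ins x).erase x = γ :=
  Subtype.ext (by simp [ins, erase, hx])

end

lemma finite_inter_of_isB0 (γ : Config X) {Λ : Set X} (hΛ : IsB0 Λ) : (γ.1 ∩ Λ).Finite :=
  (γ.2 _ hΛ.2).subset (inter_subset_inter_right _ subset_closure)

lemma measurable_ncard_inter {Λ : Set X} (hΛ : IsB0 Λ) :
    Measurable fun γ : Config X => (γ.1 ∩ Λ).ncard :=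
  measurable_iff_comap_le.2 <| (MeasurableSpace.comap_mono le_top).trans <|
    le_iSup₂ (f := fun Λ (_ : IsB0 Λ) =>
      MeasurableSpace.comap (fun γ : Config X => (γ.1 ∩ Λ).ncard) ⊤) Λ hΛ

lemma measurable_iff {α : Type*} [MeasurableSpace α] {f : α → Config X} :
    Measurable f ↔ ∀ Λ : Set X, IsB0 Λ → Measurable fun a => ((f a).1 ∩ Λ).ncard := by
  refine ⟨fun hf Λ hΛ => (measurable_ncard_inter hΛ).comp hf, fun h => ?_⟩
  simp only [measurable_iff_comap_le, instMeasurableSpaceConfig, MeasurableSpace.comap_iSup,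
    MeasurableSpace.comap_comp] at h ⊢
  exact iSup₂_le h

noncomputable def toMeasure (γ : Config X) : Measure X :=
  Measure.sum fun x : γ.1 => Measure.dirac (x : X)

lemma lintegral_toMeasure (γ : Config X) {f : X → ℝ≥0∞} (hf : Measurable f) :
    ∫⁻ x, f x ∂γ.toMeasure = ∑' x : γ.1, f x := by
  simp only [toMeasure, lintegral_sum_measure, lintegral_dirac' _ hf]

lemma toMeasure_apply_of_isB0 (γ : Config X) {Λ : Set X} (hΛ : IsB0 Λ) :
    γ.toMeasure Λ = (γ.1 ∩ Λ).ncard := by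
  rw [toMeasure, Measure.sum_dirac_apply _ hΛ.1, ← (γ.finite_inter_of_isB0 hΛ).cast_ncard_eq,
    ENat.toENNReal_coe]

lemma measurable_toMeasure_apply_of_isB0 {Λ : Set X} (hΛ : IsB0 Λ) :
    Measurable fun γ : Config X => γ.toMeasure Λ := by
  simp_rw [toMeasure_apply_of_isB0 _ hΛ]
  exact measurable_from_nat.comp (measurable_ncard_inter hΛ)

lemma measurable_toMeasure_restrict_preimage {T : Set X} (hT : IsB0 T)
    {S : Set (X × Config X)} (hS : MeasurableSet S) :
    Measurable fun γ : Config X => γ.toMeasure.restrict T ((·, γ) ⁻¹' S) := by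
  have hrect : ∀ A, MeasurableSet A → Measurable fun γ : Config X => γ.toMeasure.restrict T A :=
    fun A hA => by
      simp_rw [Measure.restrict_apply hA]
      exact measurable_toMeasure_apply_of_isB0 ⟨hA.inter hT.1, hT.2.of_isClosed_subset
        isClosed_closure (closure_mono inter_subset_right)⟩
  induction S, hS using MeasurableSpace.induction_on_inter generateFrom_prod.symm
    isPiSystem_prod with
  | empty => simp
  | basic S hS =>
    obtain ⟨A, hA, B, hB, rfl⟩ := hS
    classical
    simp only [mk_preimage_prod_left_eq_if, apply_ite]
    exact Measurable.ite hB (hrect A hA) (hrect ∅ .empty)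
  | compl S hS ih =>
    have hfin : ∀ γ : Config X, γ.toMeasure.restrict T univ ≠ ⊤ := fun γ => by
      rw [Measure.restrict_apply_univ, toMeasure_apply_of_isB0 γ hT]
      exact natCast_ne_top _
    have hdiff (γ : Config X) : γ.toMeasure.restrict T ((·, γ) ⁻¹' Sᶜ) =
        γ.toMeasure.restrict T univ - γ.toMeasure.restrict T ((·, γ) ⁻¹' S) := by
      rw [preimage_compl, measure_compl (measurable_prodMk_right hS)
        ((measure_mono (subset_univ _)).trans_lt (hfin γ).lt_top).ne]
    simp_rw [hdiff]
    exact (hrect univ .univ).sub ih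
  | iUnion f hfd hfm ihf =>
    have hsum (γ : Config X) : γ.toMeasure.restrict T ((·, γ) ⁻¹' ⋃ i, f i) =
        ∑' i, γ.toMeasure.restrict T ((·, γ) ⁻¹' f i) := by
      rw [preimage_iUnion, measure_iUnion (hfd.mono fun _ _ => .preimage _)
        fun i => measurable_prodMk_right (hfm i)]
    simpa only [hsum] using Measurable.tsum ihf

end Config

section

variable [T2Space X] [LocallyCompactSpace X] [SecondCountableTopology X] [OpensMeasurableSpace X]

namespace Config

lemma isB0_compactCovering (n : ℕ) : IsB0 (compactCovering X n) :=
  ⟨(isCompact_compactCovering X n).isClosed.measurableSet,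
    (isCompact_compactCovering X n).closure⟩

/-- `x ∈ γ` is tested on the countably many relatively compact sets `V ∩ Kₙ`, `V` basic open:
`γ` is closed, so a point outside it has a basic neighbourhood missing it. -/
lemma measurableSet_mem : MeasurableSet {p : X × Config X | p.1 ∈ p.2.1} := by
  set W : Set X → ℕ → Set X := fun V n => V ∩ compactCovering X n
  have hW : ∀ V ∈ TopologicalSpace.countableBasis X, ∀ n, IsB0 (W V n) := fun V hV n =>
    ⟨(TopologicalSpace.isOpen_of_mem_countableBasis hV).measurableSet.inter
        (isB0_compactCovering n).1,
      (isCompact_compactCovering X n).of_isClosed_subset isClosed_closure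
        (closure_minimal inter_subset_right (isCompact_compactCovering X n).isClosed)⟩
  have heq : {p : X × Config X | p.1 ∈ p.2.1} = ⋂ V ∈ TopologicalSpace.countableBasis X,
      ⋂ n, {p | p.1 ∈ W V n → (p.2.1 ∩ W V n).ncard ≠ 0} := by
    ext ⟨x, γ⟩
    simp only [mem_ofPred_eq, mem_iInter]
    refine ⟨fun hx V hV n hxW =>
      ncard_ne_zero_of_mem ⟨hx, hxW⟩ (γ.finite_inter_of_isB0 (hW V hV n)),
      fun h => by_contra fun hx => ?_⟩
    obtain ⟨V, hV, hxV, hVγ⟩ :=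
      (TopologicalSpace.isBasis_countableBasis X).exists_subset_of_mem_open hx
        γ.isClosed.isOpen_compl
    obtain ⟨n, hn⟩ := exists_mem_compactCovering x
    obtain ⟨z, hzγ, hzV, -⟩ := nonempty_of_ncard_ne_zero (h V hV n ⟨hxV, hn⟩)
    exact hVγ hzV hzγ
  rw [heq]
  refine .biInter (TopologicalSpace.countable_countableBasis X) fun V hV => .iInter fun n => ?_
  exact ((hW V hV n).1.preimage measurable_fst).imp
    (((measurable_ncard_inter (hW V hV n)).comp measurable_snd) (measurableSet_singleton 0)).compl

lemma measurable_ins : Measurable fun p : X × Config X => p.2.ins p.1 := by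
  classical
  refine measurable_iff.2 fun Λ hΛ => ?_
  have hcard : ∀ p : X × Config X, ((p.2.ins p.1).1 ∩ Λ).ncard =
      if p.1 ∈ Λ ∧ p.1 ∉ p.2.1 then (p.2.1 ∩ Λ).ncard + 1 else (p.2.1 ∩ Λ).ncard := by
    rintro ⟨x, γ⟩
    by_cases hxΛ : x ∈ Λ <;> by_cases hxγ : x ∈ γ.1
    · simp [ins, hxγ, insert_eq_of_mem hxγ]
    · simp [ins, hxΛ, hxγ, insert_inter_of_mem hxΛ,
        ncard_insert_of_notMem (fun h => hxγ h.1) (γ.finite_inter_of_isB0 hΛ)]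
    all_goals simp [ins, hxΛ, insert_inter_of_notMem hxΛ]
  simp_rw [hcard]
  have hm : Measurable fun p : X × Config X => (p.2.1 ∩ Λ).ncard :=
    (measurable_ncard_inter hΛ).comp measurable_snd
  exact Measurable.ite ((hΛ.1.preimage measurable_fst).inter measurableSet_mem.compl)
    ((measurable_from_nat (f := fun n => n + 1)).comp hm) hm

lemma measurable_erase : Measurable fun p : X × Config X => p.2.erase p.1 := by
  classical
  refine measurable_iff.2 fun Λ hΛ => ?_
  have hcard : ∀ p : X × Config X, ((p.2.erase p.1).1 ∩ Λ).ncard =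
      if p.1 ∈ Λ ∧ p.1 ∈ p.2.1 then (p.2.1 ∩ Λ).ncard - 1 else (p.2.1 ∩ Λ).ncard := by
    rintro ⟨x, γ⟩
    have hdiff : (γ.1 \ {x}) ∩ Λ = (γ.1 ∩ Λ) \ {x} := (inter_sdiff_right_comm ..).symm
    simp only [erase, hdiff]
    split_ifs with h
    · exact ncard_sdiff_singleton_of_mem (mem_inter h.2 h.1)
    · exact congrArg ncard (sdiff_singleton_eq_self fun h' => h ⟨h'.2, h'.1⟩)
  simp_rw [hcard]
  have hm : Measurable fun p : X × Config X => (p.2.1 ∩ Λ).ncard :=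
    (measurable_ncard_inter hΛ).comp measurable_snd
  exact Measurable.ite ((hΛ.1.preimage measurable_fst).inter measurableSet_mem)
    ((measurable_from_nat (f := fun n => n - 1)).comp hm) hm

lemma measurable_toMeasure_preimage {S : Set (X × Config X)} (hS : MeasurableSet S) :
    Measurable fun γ : Config X => γ.toMeasure ((·, γ) ⁻¹' S) := by
  have hsup : ∀ γ : Config X, γ.toMeasure ((·, γ) ⁻¹' S) =
      ⨆ n, γ.toMeasure.restrict (compactCovering X n) ((·, γ) ⁻¹' S) := fun γ => by
    rw [← Measure.restrict_iUnion_apply_eq_iSup (Monotone.directed_le (compactCovering_subset X))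
      (measurable_prodMk_right hS), iUnion_compactCovering, Measure.restrict_univ]
  simp_rw [hsup]
  exact .iSup fun n => measurable_toMeasure_restrict_preimage (isB0_compactCovering n) hS

lemma measurable_tsum {f : X × Config X → ℝ≥0∞} (hf : Measurable f) :
    Measurable fun γ : Config X => ∑' x : γ.1, f (x, γ) := by
  have hgraph : Measurable fun γ : Config X => γ.toMeasure.map (·, γ) :=
    Measure.measurable_of_measurable_coe _ fun S hS => by
      simp_rw [Measure.map_apply measurable_prodMk_right hS]
      exact measurable_toMeasure_preimage hS
  have hsum : ∀ γ : Config X, ∫⁻ p, f p ∂γ.toMeasure.map (·, γ) = ∑' x : γ.1, f (x, γ) :=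
    fun γ => by
      rw [lintegral_map hf measurable_prodMk_right,
        lintegral_toMeasure γ (f := fun x => f (x, γ)) (hf.comp measurable_prodMk_right)]
  simpa only [Function.comp_def, hsum] using (Measure.measurable_lintegral hf).comp hgraph

lemma measurable_tsum_of_hasCompactSupport {φ : X → ℝ} (hφ : Measurable φ)
    (hs : HasCompactSupport φ) : Measurable fun γ : Config X => ∑' x : γ.1, φ x := by
  have hfin (γ : Config X) : (Function.support fun x : γ.1 => φ x).Finite :=
    ((γ.2 _ hs).preimage Subtype.val_injective.injOn).subset
      fun x hx => ⟨x.2, subset_tsupport φ hx⟩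
  simp_rw [tsum_eq_toReal_sub_toReal (hfin _)]
  exact ((measurable_tsum (hφ.comp measurable_fst).ennreal_ofReal).ennreal_toReal).sub
    ((measurable_tsum (hφ.neg.comp measurable_fst).ennreal_ofReal).ennreal_toReal)

end Config

lemma IsCylinder.measurable {F : Config X → ℝ} (hF : IsCylinder F) : Measurable F := by
  obtain ⟨N, φ, g, hφ, hφs, hg, -, hF⟩ := hF
  rw [funext hF]
  exact hg.measurable.comp <| measurable_pi_lambda _ fun i =>
    Config.measurable_tsum_of_hasCompactSupport (hφ i).measurable (hφs i)

namespace MeckeIdentity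

variable {ν : Measure X} {μ : Measure (Config X)} {r : X → Config X → ℝ}

lemma ae_ae_ins_notMem [SFinite ν] (hMecke : MeckeIdentity ν μ r)
    (hr : Measurable fun p : X × Config X => r p.1 p.2) {N : Set (Config X)}
    (hN : MeasurableSet N) (hμN : μ N = 0) :
    ∀ᵐ γ ∂μ, ∀ᵐ x ∂ν, 0 < r x γ → γ.ins x ∉ N := by
  have hint : Measurable fun q : Config X × X =>
      ENNReal.ofReal (r q.2 q.1) * N.indicator 1 (q.1.ins q.2) :=
    (hr.comp measurable_swap).ennreal_ofReal.mul
      ((measurable_const.indicator hN).comp (Config.measurable_ins.comp measurable_swap))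
  have hzero : ∫⁻ γ, ∑' _ : γ.1, N.indicator 1 γ ∂μ = 0 := by
    refine (lintegral_congr_ae ?_).trans lintegral_zero
    filter_upwards [measure_eq_zero_iff_ae_notMem.1 hμN] with γ hγ
    simp [hγ]
  have h := hMecke (fun _ γ => N.indicator 1 γ)
    ((measurable_const.indicator hN).comp measurable_snd)
  rw [hzero, eq_comm, lintegral_eq_zero_iff hint.lintegral_prod_right'] at h
  filter_upwards [h] with γ hγ
  filter_upwards [(lintegral_eq_zero_iff (hint.comp measurable_prodMk_left)).1 hγ]
    with x hx hrx hxN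
  simp only [Function.comp_apply, indicator_of_mem hxN, Pi.one_apply, mul_one, Pi.zero_apply,
    ofReal_eq_zero] at hx
  exact hx.not_gt hrx

lemma ae_forall_mem_erase_mem [NullSingletonClass ν] (hMecke : MeckeIdentity ν μ r)
    {S : Set (X × Config X)} (hS : MeasurableSet S)
    (h : ∀ᵐ γ ∂μ, ∀ᵐ x ∂ν, 0 < r x γ → (x, γ) ∈ S) :
    ∀ᵐ γ ∂μ, ∀ x ∈ γ.1, (x, γ.erase x) ∈ S := by
  set H : X → Config X → ℝ≥0∞ := fun x γ => Sᶜ.indicator 1 (x, γ.erase x)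
  have hH : Measurable fun p : X × Config X => H p.1 p.2 :=
    (measurable_const.indicator hS.compl).comp (measurable_fst.prodMk Config.measurable_erase)
  have hzero : ∫⁻ γ, ∑' x : γ.1, H x γ ∂μ = 0 := by
    rw [hMecke H hH]
    refine (lintegral_congr_ae ?_).trans lintegral_zero
    filter_upwards [h] with γ hγ
    refine (lintegral_congr_ae ?_).trans lintegral_zero
    filter_upwards [hγ, γ.countable.ae_notMem ν] with x hxS hxγ
    rcases lt_or_ge 0 (r x γ) with hrx | hrx
    · simp [H, Config.erase_ins_of_notMem hxγ, hxS hrx]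
    · simp [ENNReal.ofReal_eq_zero.2 hrx]
  filter_upwards [(lintegral_eq_zero_iff (Config.measurable_tsum hH)).1 hzero] with γ hγ x hx
  simpa [H] using ENNReal.tsum_eq_zero.1 hγ ⟨x, hx⟩

end MeckeIdentity

end

theorem kawasaki_form_well_defined_general {X : Type*} [TopologicalSpace X]
    [LocallyCompactSpace X] [SecondCountableTopology X] [T2Space X]
    [MeasurableSpace X] [BorelSpace X]
    (ν : Measure X) [ν.Regular] [NullSingletonClass ν]
    (μ : Measure (Config X))
    (r : X → Config X → ℝ) (hr0 : ∀ x γ, 0 ≤ r x γ)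
    (hrm : Measurable fun p : X × Config X => r p.1 p.2)
    (hMecke : MeckeIdentity ν μ r)
    (c : X → X → Config X → ℝ)
    (hcm : Measurable fun p : X × X × Config X => c p.1 p.2.1 p.2.2)
    (hK0 : ∀ x y γ, r x γ = 0 ∨ r y γ = 0 → c x y γ = 0)
    (F G : Config X → ℝ) (hF : IsCylinder F)
    (hF0 : ∀ᵐ γ ∂μ, F γ = 0) :
    kawasakiE ν μ c F G = 0 := by
  have hN : MeasurableSet {γ : Config X | F γ ≠ 0} :=
    (hF.measurable (measurableSet_singleton 0)).compl
  have hins := hMecke.ae_ae_ins_notMem hrm hN (ae_iff.1 hF0)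
  set S : Set (X × Config X) := {p | ∀ᵐ y ∂ν, c p.1 y p.2 ≠ 0 → F (p.2.ins y) = 0}
  have hS : MeasurableSet S := measurableSet_setOf_ae <|
    (hcm.comp (measurable_fst.fst.prodMk (measurable_snd.prodMk measurable_fst.snd))
      (measurableSet_singleton 0)).compl.imp
    (hF.measurable.comp (Config.measurable_ins.comp (measurable_snd.prodMk measurable_fst.snd))
      (measurableSet_singleton 0))
  have hS_ae : ∀ᵐ γ ∂μ, ∀ᵐ x ∂ν, 0 < r x γ → (x, γ) ∈ S := by
    filter_upwards [hins] with γ hγ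
    refine ae_of_all _ fun x _ => ?_
    filter_upwards [hγ] with y hy hc
    exact not_not.1 (hy ((hr0 y γ).lt_of_ne' fun h => hc (hK0 x y γ (Or.inr h))))
  rw [kawasakiE]
  refine integral_eq_zero_of_ae ?_
  filter_upwards [hF0, hMecke.ae_forall_mem_erase_mem hS hS_ae] with γ hFγ hγ
  refine (tsum_congr fun x => integral_eq_zero_of_ae ?_).trans tsum_zero
  filter_upwards [hγ x x.2] with y hy
  by_cases hc : c x y (γ.erase x) = 0
  · simp [hc]
  · simp [Dpm, hy hc, hFγ]

/-- Under the Mecke identity and conditions (K0) and (K1), if `F, G ∈ FC_b` and `F = 0`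
μ-a.e., then `ℰ_K(F,G) = 0`. -/
theorem kawasaki_form_well_defined {X : Type*} [TopologicalSpace X]
    [LocallyCompactSpace X] [SecondCountableTopology X] [T2Space X]
    [MeasurableSpace X] [BorelSpace X]
    (ν : Measure X) [ν.Regular] [NullSingletonClass ν]
    (μ : Measure (Config X)) [IsProbabilityMeasure μ]
    (r : X → Config X → ℝ) (hr0 : ∀ x γ, 0 ≤ r x γ)
    (hrm : Measurable fun p : X × Config X => r p.1 p.2)
    (hMecke : MeckeIdentity ν μ r)
    (c : X → X → Config X → ℝ) (hc0 : ∀ x y γ, 0 ≤ c x y γ)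
    (hcm : Measurable fun p : X × X × Config X => c p.1 p.2.1 p.2.2)
    (hK0 : ∀ x y γ, r x γ = 0 ∨ r y γ = 0 → c x y γ = 0)
    (hK1 : CondK1 ν μ c)
    (F G : Config X → ℝ) (hF : IsCylinder F) (hG : IsCylinder G)
    (hF0 : ∀ᵐ γ ∂μ, F γ = 0) :
    kawasakiE ν μ c F G = 0 :=
  kawasaki_form_well_defined_general ν μ r hr0 hrm hMecke c hcm hK0 F G hF hF0
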